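/- arXiv:2311.10001 — 5 statements merged into one kernel-verified Lean document; each statement's English description precedes it below -/
import Mathlib

section
/- (Lemma 1, main bound.) For every λ > 0, (1/n) log 𝔼[exp(λ S_n)] ≤ B(λ; c_*, v̄, K, K_1) = (1/2) λ² v̄ + λ² K (f_2(λ c_*) − 1/2) − λ⁴ c_*² K_1 f_4(λ c_*). -/
open MeasureTheory ProbabilityTheory Real Finset

/-- `f k u = ∑_{j=0}^∞ u^j / (j+k)!`. -/
noncomputable def fSeries (k : ℕ) (u : ℝ) : ℝ := ∑' j : ℕ, u ^ j / (Nat.factorial (j + k) : ℝ)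

/-!
Since `X i ≤ c i`, the pointwise bound `exp s ≤ 1 + s + s² f₂(u)` for `s ≤ u`, `0 ≤ u` (from
`exp s = 1 + s + s² f₂(s)` and the monotonicity of `f₂` when `s ≥ 0`, from `exp s ≤ 1 + s + s²/2`
when `s ≤ 0`) gives `𝔼 exp(λ X i) ≤ 1 + λ² σ i² f₂(λ c i)`, hence, by `log x ≤ x - 1`, the bound
`λ² σ i² f₂(λ c i)` on the cumulant generating function of `X i`. With `θ = c i / c✶ ∈ [0, 1]` and
`u = λ c✶`, the recursion `f₂(u) = 1/2 + u/6 + u² f₄(u)` reduces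
`f₂(θ u) ≤ (1 - θ)/2 + θ f₂(u) - u² θ (1 - θ) f₄(u)` to `f₄(θ u) ≤ f₄(u)`. By independence the
cumulant generating function of the sum is the sum of those of the `X i`, and averaging gives
the bound in terms of `v̄`, `K`, `K₁`.
-/

open Nat in
lemma summable_fSeries (k : ℕ) (u : ℝ) : Summable fun j : ℕ => u ^ j / (j + k)! := by
  refine .of_norm_bounded (Real.summable_pow_div_factorial |u|) fun j => ?_
  rw [norm_div, norm_pow, Real.norm_eq_abs, Real.norm_natCast]
  gcongr
  omega

lemma fSeries_eq_inv_factorial_add_mul (k : ℕ) (u : ℝ) :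
    fSeries k u = 1 / k.factorial + u * fSeries (k + 1) u := by
  rw [fSeries, (summable_fSeries k u).tsum_eq_zero_add, fSeries, ← tsum_mul_left]
  congr 1
  · simp
  · congr 1
    ext j
    rw [pow_succ, add_right_comm, ← add_assoc]
    ring

lemma fSeries_zero (u : ℝ) : fSeries 0 u = exp u := by
  simp [fSeries, Real.exp_eq_exp_ℝ, NormedSpace.exp_eq_tsum_div]

lemma exp_eq_one_add_add_sq_mul_fSeries_two (s : ℝ) : exp s = 1 + s + s ^ 2 * fSeries 2 s := by
  rw [← fSeries_zero, fSeries_eq_inv_factorial_add_mul, fSeries_eq_inv_factorial_add_mul]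
  norm_num
  ring

lemma fSeries_two_eq (u : ℝ) : fSeries 2 u = 1 / 2 + u / 6 + u ^ 2 * fSeries 4 u := by
  rw [fSeries_eq_inv_factorial_add_mul, fSeries_eq_inv_factorial_add_mul]
  norm_num [Nat.factorial]
  ring

lemma fSeries_monotoneOn (k : ℕ) : MonotoneOn (fSeries k) (Set.Ici 0) := fun s hs u _ hsu =>
  (summable_fSeries k s).tsum_le_tsum (fun j => by gcongr) (summable_fSeries k u)

lemma fSeries_two_mul_add_le {u θ : ℝ} (hu : 0 ≤ u) (hθ₀ : 0 ≤ θ) (hθ₁ : θ ≤ 1) :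
    fSeries 2 (θ * u) + u ^ 2 * θ * (1 - θ) * fSeries 4 u ≤ (1 - θ) / 2 + θ * fSeries 2 u := by
  have hmono : fSeries 4 (θ * u) ≤ fSeries 4 u :=
    fSeries_monotoneOn 4 (Set.mem_Ici.2 (by positivity)) (Set.mem_Ici.2 hu) (mul_le_of_le_one_left hu hθ₁)
  rw [fSeries_two_eq, fSeries_two_eq]
  linear_combination (θ * u) ^ 2 * hmono

lemma exp_le_one_add_add_sq_div_two {s : ℝ} (hs : s ≤ 0) : exp s ≤ 1 + s + s ^ 2 / 2 := by
  have hmono : Monotone fun x => exp x - (1 + x + x ^ 2 / 2) := by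
    refine monotone_of_deriv_nonneg (by fun_prop) fun x => ?_
    have hderiv : HasDerivAt (fun x => exp x - (1 + x + x ^ 2 / 2)) (exp x - (1 + x)) x := by
      have := (hasDerivAt_exp x).sub (((hasDerivAt_id' x).const_add 1).add
        ((hasDerivAt_pow 2 x).div_const 2))
      exact this.congr_deriv (by norm_num)
    rw [hderiv.deriv]
    linarith [add_one_le_exp x]
  simpa using hmono hs

lemma exp_le_one_add_add_sq_mul_fSeries_two {s u : ℝ} (hu : 0 ≤ u) (hsu : s ≤ u) :
    exp s ≤ 1 + s + s ^ 2 * fSeries 2 u := by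
  rcases le_total s 0 with hs | hs
  · have hhalf : 1 / 2 ≤ fSeries 2 u := by
      simpa [fSeries_two_eq 0] using fSeries_monotoneOn 2 Set.self_mem_Ici hu hu
    calc exp s ≤ 1 + s + s ^ 2 / 2 := exp_le_one_add_add_sq_div_two hs
      _ ≤ 1 + s + s ^ 2 * fSeries 2 u := by linarith [mul_le_mul_of_nonneg_left hhalf (sq_nonneg s)]
  · rw [exp_eq_one_add_add_sq_mul_fSeries_two]
    gcongr
    exact fSeries_monotoneOn 2 hs (hs.trans hsu) hsu

section Cgf

variable {Ω : Type*} [MeasurableSpace Ω] {μ : Measure Ω} [IsProbabilityMeasure μ] {Y : Ω → ℝ}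
  {c t : ℝ}

lemma cgf_le_sq_mul_variance_mul_fSeries_two (hmean : μ[Y] = 0) (hY : MemLp Y 2 μ) (hc : 0 ≤ c)
    (hbdd : ∀ᵐ ω ∂μ, Y ω ≤ c) (ht : 0 ≤ t) :
    cgf Y μ t ≤ t ^ 2 * variance Y μ * fSeries 2 (t * c) := by
  have hint : Integrable (fun ω => exp (t * Y ω)) μ :=
    integrable_exp_mul_of_le t c ht hY.aemeasurable hbdd
  have hY₁ : Integrable Y μ := hY.integrable one_le_two
  have hY₂ : Integrable (fun ω => Y ω ^ 2) μ := hY.integrable_sq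
  have hlin : Integrable (fun ω => 1 + t * Y ω) μ := (integrable_const 1).add (hY₁.const_mul t)
  have hquad : Integrable (fun ω => 1 + t * Y ω + t ^ 2 * fSeries 2 (t * c) * Y ω ^ 2) μ :=
    hlin.add (hY₂.const_mul _)
  have hmgf : mgf Y μ t ≤ 1 + t ^ 2 * variance Y μ * fSeries 2 (t * c) := calc
    mgf Y μ t ≤ ∫ ω, 1 + t * Y ω + t ^ 2 * fSeries 2 (t * c) * Y ω ^ 2 ∂μ := by
      refine integral_mono_ae hint hquad ?_
      filter_upwards [hbdd] with ω hω
      have := exp_le_one_add_add_sq_mul_fSeries_two (by positivity)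
        (mul_le_mul_of_nonneg_left hω ht)
      linarith
    _ = 1 + t ^ 2 * variance Y μ * fSeries 2 (t * c) := by
      rw [integral_add hlin (hY₂.const_mul _),
        integral_add (integrable_const 1) (hY₁.const_mul t), integral_const_mul,
        integral_const_mul, hmean, variance_of_integral_eq_zero hY.aemeasurable hmean]
      simp only [integral_const, probReal_univ, smul_eq_mul, mul_one, mul_zero, add_zero,
        add_right_inj]
      ring
  calc cgf Y μ t = log (mgf Y μ t) := rfl
    _ ≤ mgf Y μ t - 1 := log_le_sub_one_of_pos (mgf_pos hint)
    _ ≤ t ^ 2 * variance Y μ * fSeries 2 (t * c) := by linarith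

lemma cgf_le_variance_mul {cstar : ℝ} (hmean : μ[Y] = 0) (hY : MemLp Y 2 μ) (hc : 0 ≤ c)
    (hbdd : ∀ᵐ ω ∂μ, Y ω ≤ c) (hcstar : c ≤ cstar) (hcstar_pos : 0 < cstar) (ht : 0 ≤ t) :
    cgf Y μ t ≤ variance Y μ * (t ^ 2 / 2 + t ^ 2 * (c / cstar) * (fSeries 2 (t * cstar) - 1 / 2)
      - t ^ 4 * cstar ^ 2 * (c / cstar) * (1 - c / cstar) * fSeries 4 (t * cstar)) := by
  set θ := c / cstar
  have htc : t * c = θ * (t * cstar) := by simp only [θ]; field_simp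
  have hθ := fSeries_two_mul_add_le (u := t * cstar) (by positivity) (by positivity)
    (div_le_one_of_le₀ hcstar hcstar_pos.le)
  calc cgf Y μ t ≤ t ^ 2 * variance Y μ * fSeries 2 (θ * (t * cstar)) := by
        rw [← htc]; exact cgf_le_sq_mul_variance_mul_fSeries_two hmean hY hc hbdd ht
    _ ≤ t ^ 2 * variance Y μ * ((1 - θ) / 2 + θ * fSeries 2 (t * cstar)
          - (t * cstar) ^ 2 * θ * (1 - θ) * fSeries 4 (t * cstar)) := by
        gcongr
        · exact mul_nonneg (sq_nonneg t) (variance_nonneg Y μ)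
        · linarith
    _ = _ := by ring

end Cgf

theorem lemma_one_mgf_bound_general
    {Ω : Type*} [MeasurableSpace Ω] (μ : Measure Ω) [IsProbabilityMeasure μ]
    (n : ℕ) (X : Fin n → Ω → ℝ) (σ c : Fin n → ℝ) (cstar : ℝ)
    (hindep : iIndepFun X μ)
    (hmean : ∀ i, ∫ ω, X i ω ∂μ = 0)
    (hL2 : ∀ i, MemLp (X i) 2 μ)
    (hvar : ∀ i, variance (X i) μ = σ i ^ 2)
    (hcnonneg : ∀ i, 0 ≤ c i)
    (hbdd : ∀ i, ∀ᵐ ω ∂μ, X i ω ≤ c i)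
    (hcmax : ∀ i, c i ≤ cstar) (hcpos : 0 < cstar)
    (v K K1 : ℝ)
    (hv : v = (1 / (n : ℝ)) * ∑ i, σ i ^ 2)
    (hK : K = (1 / (n : ℝ)) * ∑ i, σ i ^ 2 * (c i / cstar))
    (hK1 : K1 = (1 / (n : ℝ)) * ∑ i, σ i ^ 2 * (c i / cstar) * (1 - c i / cstar))
    (l : ℝ) (hl : 0 < l) :
    Real.log (∫ ω, Real.exp (l * ∑ i, X i ω) ∂μ) / (n : ℝ) ≤
      (1 / 2) * l ^ 2 * v + l ^ 2 * K * (fSeries 2 (l * cstar) - 1 / 2) -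
        l ^ 4 * cstar ^ 2 * K1 * fSeries 4 (l * cstar) := by
  have hlog : Real.log (∫ ω, Real.exp (l * ∑ i, X i ω) ∂μ) = ∑ i, cgf (X i) μ l := by
    rw [← hindep.cgf_sum₀ (fun i => (hL2 i).aemeasurable) fun i _ =>
      integrable_exp_mul_of_le l (c i) hl.le (hL2 i).aemeasurable (hbdd i)]
    simp [cgf, mgf, Finset.sum_apply]
  have hbound : (1 / 2) * l ^ 2 * v + l ^ 2 * K * (fSeries 2 (l * cstar) - 1 / 2) -
      l ^ 4 * cstar ^ 2 * K1 * fSeries 4 (l * cstar) = 1 / n * ∑ i, σ i ^ 2 * (l ^ 2 / 2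
        + l ^ 2 * (c i / cstar) * (fSeries 2 (l * cstar) - 1 / 2)
        - l ^ 4 * cstar ^ 2 * (c i / cstar) * (1 - c i / cstar) * fSeries 4 (l * cstar)) := by
    simp only [hv, hK, hK1, Finset.mul_sum, Finset.sum_mul, ← Finset.sum_add_distrib,
      ← Finset.sum_sub_distrib]
    exact Finset.sum_congr rfl fun i _ => by ring
  rw [hlog, hbound, div_eq_inv_mul, ← one_div]
  gcongr with i
  exact hvar i ▸ cgf_le_variance_mul (hmean i) (hL2 i) (hcnonneg i) (hbdd i) (hcmax i) hcpos hl.le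

/-- **Lemma 1, main bound.** For independent mean-zero `X i` with variances `σ i ^ 2`,
`X i ≤ c i` a.s., `c✶ = max c i > 0`, and summaries `v̄`, `K`, `K₁`, for every `λ > 0`:
`(1/n) log 𝔼[exp (λ S_n)] ≤ (1/2) λ² v̄ + λ² K (f₂(λ c✶) − 1/2) − λ⁴ c✶² K₁ f₄(λ c✶)`. -/
theorem lemma_one_mgf_bound
    {Ω : Type*} [MeasurableSpace Ω] (μ : Measure Ω) [IsProbabilityMeasure μ]
    (n : ℕ) (hn : 0 < n) (X : Fin n → Ω → ℝ) (σ c : Fin n → ℝ) (cstar : ℝ)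
    (hmeas : ∀ i, Measurable (X i))
    (hindep : iIndepFun X μ)
    (hmean : ∀ i, ∫ ω, X i ω ∂μ = 0)
    (hL2 : ∀ i, MemLp (X i) 2 μ)
    (hvar : ∀ i, variance (X i) μ = σ i ^ 2)
    (hcnonneg : ∀ i, 0 ≤ c i)
    (hbdd : ∀ i, ∀ᵐ ω ∂μ, X i ω ≤ c i)
    (hcmax : ∀ i, c i ≤ cstar) (hcattained : ∃ i, c i = cstar) (hcpos : 0 < cstar)
    (v K K1 : ℝ)
    (hv : v = (1 / (n : ℝ)) * ∑ i, σ i ^ 2)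
    (hK : K = (1 / (n : ℝ)) * ∑ i, σ i ^ 2 * (c i / cstar))
    (hK1 : K1 = (1 / (n : ℝ)) * ∑ i, σ i ^ 2 * (c i / cstar) * (1 - c i / cstar))
    (l : ℝ) (hl : 0 < l) :
    Real.log (∫ ω, Real.exp (l * ∑ i, X i ω) ∂μ) / (n : ℝ) ≤
      (1 / 2) * l ^ 2 * v + l ^ 2 * K * (fSeries 2 (l * cstar) - 1 / 2) -
        l ^ 4 * cstar ^ 2 * K1 * fSeries 4 (l * cstar) :=
  lemma_one_mgf_bound_general μ n X σ c cstar hindep hmean hL2 hvar hcnonneg hbdd hcmax hcpos v K K1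
    hv hK hK1 l hl
end

section
/- (Attainment of the infimum in Theorem 3, equality of bounds (22) and (23).) Let c_* > 0, t > 0, K > 0 and v̄ ≥ K be real constants, define B(λ; c_*, v̄, K, 0) = (1/2) λ² v̄ + λ² K (f_2(λ c_*) − 1/2), and let λ_* be the unique positive solution of (K/c_*) e^{λ c_*} = −λ (v̄ − K) + t + K/c_*. Then inf_{λ > 0} { B(λ; c_*, v̄, K, 0) − λ t } = B(λ_*; c_*, v̄, K, 0) − λ_* t. -/
open Real

/-!
Writing `u² f₂(u) = eᵘ - 1 - u`, the objective `B(λ) - λ t` becomes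
`½ λ² (v̄ - K) + (K / c✶²) (e^{λ c✶} - 1 - λ c✶) - λ t`, a convex function of `λ` whose derivative
`λ (v̄ - K) + (K / c✶) (e^{λ c✶} - 1) - t` vanishes exactly when `λ` solves the defining equation
of `λ✶`. Concretely, `B(λ) - λ t - (B(λ✶) - λ✶ t)` splits into a nonnegative quadratic term,
a nonnegative tangent-line gap of the exponential, and `(λ - λ✶)` times the derivative at `λ✶`,
which is zero.
-/

theorem pow_mul_fSeries (k : ℕ) (u : ℝ) :
    u ^ k * fSeries k u = exp u - ∑ j ∈ Finset.range k, u ^ j / (j.factorial : ℝ) := by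
  have hexp : exp u = ∑' n : ℕ, u ^ n / n.factorial := by
    rw [exp_eq_exp_ℝ, NormedSpace.exp_eq_tsum_div]
  rw [hexp, ← (summable_pow_div_factorial u).sum_add_tsum_nat_add k, add_sub_cancel_left,
    fSeries, ← tsum_mul_left]
  refine tsum_congr fun j => ?_
  rw [pow_add]
  ring

theorem sq_mul_fSeries_two (u : ℝ) : u ^ 2 * fSeries 2 u = exp u - 1 - u := by
  rw [pow_mul_fSeries]
  simp only [Finset.sum_range_succ, Finset.range_one, Finset.sum_singleton, pow_zero,
    Nat.factorial_zero, Nat.cast_one, div_one, pow_one, Nat.factorial_one]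
  ring

theorem exp_mul_sub_le_exp_sub_exp (a b : ℝ) : exp a * (b - a) ≤ exp b - exp a := by
  have h : exp b = exp a * exp (b - a) := by rw [← exp_add, add_sub_cancel]
  nlinarith [add_one_le_exp (b - a), exp_pos a]

/-- The bound `B(λ; c✶, v̄, K, 0)` of the paper. -/
noncomputable def boundB (cstar v K l : ℝ) : ℝ :=
  (1 / 2) * l ^ 2 * v + l ^ 2 * K * (fSeries 2 (l * cstar) - 1 / 2)

theorem boundB_eq {cstar : ℝ} (hc : cstar ≠ 0) (v K l : ℝ) :
    boundB cstar v K l =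
      (1 / 2) * l ^ 2 * (v - K) + K / cstar ^ 2 * (exp (l * cstar) - 1 - l * cstar) := by
  have h := sq_mul_fSeries_two (l * cstar)
  rw [boundB]
  field_simp
  linear_combination 2 * K * h

theorem boundB_sub_boundB {cstar : ℝ} (hc : cstar ≠ 0) (v K t l l₀ : ℝ) :
    boundB cstar v K l - l * t - (boundB cstar v K l₀ - l₀ * t) =
      (1 / 2) * (v - K) * (l - l₀) ^ 2
        + K / cstar ^ 2 *
            (exp (l * cstar) - exp (l₀ * cstar) - exp (l₀ * cstar) * (l * cstar - l₀ * cstar))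
        + (l - l₀) * (l₀ * (v - K) + K / cstar * (exp (l₀ * cstar) - 1) - t) := by
  rw [boundB_eq hc, boundB_eq hc]
  field_simp
  ring

theorem boundB_sub_le_of_deriv_eq_zero {cstar K v t l₀ : ℝ} (hc : cstar ≠ 0) (hK : 0 ≤ K)
    (hvK : K ≤ v) (hderiv : l₀ * (v - K) + K / cstar * (exp (l₀ * cstar) - 1) - t = 0) (l : ℝ) :
    boundB cstar v K l₀ - l₀ * t ≤ boundB cstar v K l - l * t := by
  have hquad : 0 ≤ (1 / 2) * (v - K) * (l - l₀) ^ 2 := by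
    have : 0 ≤ v - K := sub_nonneg.2 hvK
    positivity
  have htangent : 0 ≤ K / cstar ^ 2 *
      (exp (l * cstar) - exp (l₀ * cstar) - exp (l₀ * cstar) * (l * cstar - l₀ * cstar)) :=
    mul_nonneg (by positivity) (sub_nonneg.2 (exp_mul_sub_le_exp_sub_exp _ _))
  have := boundB_sub_boundB hc v K t l l₀
  rw [hderiv, mul_zero, add_zero] at this
  linarith

theorem inf_attained_at_lambda_star_general
    (cstar t K v : ℝ) (hc : 0 < cstar) (hK : 0 < K) (hvK : K ≤ v)
    (lstar : ℝ) (hlstar : 0 < lstar)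
    (heq : (K / cstar) * Real.exp (lstar * cstar) = -lstar * (v - K) + t + K / cstar) :
    sInf {y : ℝ | ∃ l : ℝ, 0 < l ∧
        y = ((1 / 2) * l ^ 2 * v + l ^ 2 * K * (fSeries 2 (l * cstar) - 1 / 2)) - l * t} =
      ((1 / 2) * lstar ^ 2 * v + lstar ^ 2 * K * (fSeries 2 (lstar * cstar) - 1 / 2))
        - lstar * t := by
  have hderiv : lstar * (v - K) + K / cstar * (exp (lstar * cstar) - 1) - t = 0 := by
    linear_combination heq
  refine IsLeast.csInf_eq ⟨⟨lstar, hlstar, rfl⟩, ?_⟩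
  rintro y ⟨l, -, rfl⟩
  exact boundB_sub_le_of_deriv_eq_zero hc.ne' hK.le hvK hderiv l

/-- **Attainment of the infimum in Theorem 3** (equality of bounds (22) and (23)).
Let `c✶ > 0`, `t > 0`, `K > 0`, `v̄ ≥ K`, `B(λ) = (1/2) λ² v̄ + λ² K (f₂(λ c✶) − 1/2)`,
and let `λ✶ > 0` be the unique positive solution of
`(K/c✶) e^{λ c✶} = −λ (v̄ − K) + t + K/c✶`. Then
`inf_{λ > 0} {B(λ) − λ t} = B(λ✶) − λ✶ t`. -/
theorem inf_attained_at_lambda_star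
    (cstar t K v : ℝ) (hc : 0 < cstar) (ht : 0 < t) (hK : 0 < K) (hvK : K ≤ v)
    (lstar : ℝ) (hlstar : 0 < lstar)
    (heq : (K / cstar) * Real.exp (lstar * cstar) = -lstar * (v - K) + t + K / cstar) :
    sInf {y : ℝ | ∃ l : ℝ, 0 < l ∧
        y = ((1 / 2) * l ^ 2 * v + l ^ 2 * K * (fSeries 2 (l * cstar) - 1 / 2)) - l * t} =
      ((1 / 2) * lstar ^ 2 * v + lstar ^ 2 * K * (fSeries 2 (lstar * cstar) - 1 / 2))
        - lstar * t :=
  inf_attained_at_lambda_star_general cstar t K v hc hK hvK lstar hlstar heq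
end

section
/- (Interpolation bound on f_2 from the proof of Lemma 1.) For all real u, u_* with 0 ≤ u ≤ u_* and u_* > 0, f_2(u) ≤ 1/2 + (u/u_*) (f_2(u_*) − 1/2) − (u/u_*)(1 − u/u_*) u_*² f_4(u_*). -/
open Real

lemma fSeries_summable (k : ℕ) (u : ℝ) (hu : 0 ≤ u) :
    Summable (fun j : ℕ => u ^ j / (Nat.factorial (j + k) : ℝ)) := by
  refine Summable.of_nonneg_of_le (fun j => by positivity) (fun j => ?_)
    (Real.summable_pow_div_factorial u)
  gcongr
  · exact Nat.le_add_right j k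

lemma tail2 (v : ℝ) (hv : 0 ≤ v) :
    fSeries 2 v = 1/2 + v/6 + ∑' j : ℕ, v ^ (j+2) / (Nat.factorial (j+4) : ℝ) := by
  have h := fSeries_summable 2 v hv
  have h1 : Summable (fun j : ℕ => v ^ (j+1) / (Nat.factorial (j+1+2) : ℝ)) :=
    (summable_nat_add_iff 1).mpr h
  rw [fSeries, Summable.tsum_eq_zero_add h, Summable.tsum_eq_zero_add h1]
  norm_num [Nat.factorial]
  ring

/-- **Interpolation bound on `f₂`** (from the proof of Lemma 1).
For `0 ≤ u ≤ u✶` with `u✶ > 0`,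
`f₂(u) ≤ 1/2 + (u/u✶)(f₂(u✶) − 1/2) − (u/u✶)(1 − u/u✶) u✶² f₄(u✶)`. -/
theorem f_two_interpolation_bound
    (u ustar : ℝ) (hu : 0 ≤ u) (huu : u ≤ ustar) (hustar : 0 < ustar) :
    fSeries 2 u ≤ 1 / 2 + (u / ustar) * (fSeries 2 ustar - 1 / 2) -
      (u / ustar) * (1 - u / ustar) * ustar ^ 2 * fSeries 4 ustar := by
  set t := u / ustar with ht
  have ht0 : 0 ≤ t := div_nonneg hu hustar.le
  have ht1 : t ≤ 1 := div_le_one_of_le₀ huu hustar.le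
  have hus : (0:ℝ) ≤ ustar := hustar.le
  have hut : t * ustar = u := div_mul_cancel₀ u hustar.ne'
  have hTu : Summable (fun j : ℕ => u ^ (j+2) / (Nat.factorial (j+4) : ℝ)) :=
    (summable_nat_add_iff (f := fun j : ℕ => u ^ j / (Nat.factorial (j+2) : ℝ)) 2).mpr
      (fSeries_summable 2 u hu)
  have hTs : Summable (fun j : ℕ => ustar ^ (j+2) / (Nat.factorial (j+4) : ℝ)) :=
    (summable_nat_add_iff (f := fun j : ℕ => ustar ^ j / (Nat.factorial (j+2) : ℝ)) 2).mpr
      (fSeries_summable 2 ustar hus)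
  have hf4 : ustar ^ 2 * fSeries 4 ustar
      = ∑' j : ℕ, ustar ^ (j+2) / (Nat.factorial (j+4) : ℝ) := by
    rw [fSeries, ← tsum_mul_left]
    exact tsum_congr fun j => by rw [pow_add, pow_two]; ring
  rw [tail2 u hu, tail2 ustar hus]
  have key : (∑' j : ℕ, u ^ (j+2) / (Nat.factorial (j+4) : ℝ))
      ≤ t ^ 2 * ∑' j : ℕ, ustar ^ (j+2) / (Nat.factorial (j+4) : ℝ) := by
    rw [← tsum_mul_left]
    refine Summable.tsum_le_tsum (fun j => ?_) hTu (hTs.mul_left _)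
    have hup : u ^ (j+2) = t ^ j * t ^ 2 * ustar ^ (j+2) := by
      rw [← hut]; ring
    rw [hup]
    have : t ^ j * t ^ 2 ≤ 1 * t ^ 2 := by
      gcongr
      exact pow_le_one₀ ht0 ht1
    calc t ^ j * t ^ 2 * ustar ^ (j+2) / (Nat.factorial (j+4) : ℝ)
        ≤ 1 * t ^ 2 * ustar ^ (j+2) / (Nat.factorial (j+4) : ℝ) := by
          gcongr
        _ = t ^ 2 * (ustar ^ (j+2) / (Nat.factorial (j+4) : ℝ)) := by ring
  have expand : 1 / 2 + t * (1/2 + ustar/6 + (∑' j : ℕ, ustar ^ (j+2) / (Nat.factorial (j+4) : ℝ)) - 1 / 2) -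
      t * (1 - t) * ustar ^ 2 * fSeries 4 ustar
      = 1/2 + u/6 + t ^ 2 * ∑' j : ℕ, ustar ^ (j+2) / (Nat.factorial (j+4) : ℝ) := by
    rw [mul_assoc (t * (1-t)), hf4, ← hut]; ring
  rw [expand]
  linarith [key]
end

section
/- (Sharpness of the interpolation bound on f_2, from the proof of Lemma 1.) For all real u, u_* with 0 ≤ u ≤ u_* and u_* > 0, the discrepancy between the interpolation upper bound and f_2 satisfies [ 1/2 + (u/u_*)(f_2(u_*) − 1/2) − (u/u_*)(1 − u/u_*) u_*² f_4(u_*) ] − f_2(u) ≤ (u²/u_*²) u_*³ f_5(u_*). -/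
open Real

lemma summable_fk (x : ℝ) (k : ℕ) :
    Summable (fun j : ℕ => x ^ j / (Nat.factorial (j + k) : ℝ)) := by
  apply Summable.of_norm
  apply Summable.of_nonneg_of_le (fun j => norm_nonneg _) ?_
    (Real.summable_pow_div_factorial |x|)
  intro j
  rw [norm_div, norm_pow, Real.norm_eq_abs, Real.norm_natCast]
  apply div_le_div_of_nonneg_left (pow_nonneg (abs_nonneg x) j) ?_ ?_
  · positivity
  · exact_mod_cast Nat.factorial_le (Nat.le_add_right j k)

/-- **Sharpness of the interpolation bound on `f₂`** (from the proof of Lemma 1).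
For `0 ≤ u ≤ u✶` with `u✶ > 0`, the discrepancy between the interpolation upper bound and
`f₂(u)` is at most `(u²/u✶²) u✶³ f₅(u✶)`. -/
theorem f_two_interpolation_sharpness
    (u ustar : ℝ) (hu : 0 ≤ u) (huu : u ≤ ustar) (hustar : 0 < ustar) :
    (1 / 2 + (u / ustar) * (fSeries 2 ustar - 1 / 2) -
        (u / ustar) * (1 - u / ustar) * ustar ^ 2 * fSeries 4 ustar) - fSeries 2 u ≤
      (u ^ 2 / ustar ^ 2) * ustar ^ 3 * fSeries 5 ustar := by
  set t := u / ustar with ht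
  have hne : ustar ≠ 0 := ne_of_gt hustar
  have ht0 : 0 ≤ t := div_nonneg hu hustar.le
  have ht1 : t ≤ 1 := (div_le_one hustar).mpr huu
  set g : ℕ → ℝ := fun j => ustar ^ j / (Nat.factorial (j + 2) : ℝ) with hgdef
  have hg : Summable g := summable_fk ustar 2
  have hgt : Summable (fun j => t ^ j * g j) := by
    have := summable_fk u 2
    apply this.congr
    intro j
    simp only [hgdef, ht]
    rw [div_pow, div_mul_div_comm, mul_comm (u ^ j),
      mul_div_mul_left _ _ (pow_ne_zero j hne)]
  -- f2 u = ∑' t^j g j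
  have hf2u : fSeries 2 u = ∑' j, t ^ j * g j := by
    unfold fSeries
    refine tsum_congr fun j => ?_
    simp only [hgdef, ht]
    rw [div_pow, div_mul_div_comm, mul_comm (u ^ j),
      mul_div_mul_left _ _ (pow_ne_zero j hne)]
  -- f2 ustar = ∑' g
  have hf2 : fSeries 2 ustar = ∑' j, g j := rfl
  -- ustar^2 * f4 = ∑' g (j+2)
  have hf4 : ustar ^ 2 * fSeries 4 ustar = ∑' j, g (j + 2) := by
    unfold fSeries
    rw [← tsum_mul_left]
    refine tsum_congr fun j => ?_
    simp only [hgdef]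
    rw [pow_add]
    have : j + 2 + 2 = j + 4 := by ring
    rw [this]
    ring
  have hf5 : ustar ^ 3 * fSeries 5 ustar = ∑' j, g (j + 3) := by
    unfold fSeries
    rw [← tsum_mul_left]
    refine tsum_congr fun j => ?_
    simp only [hgdef]
    have : j + 3 + 2 = j + 5 := by ring
    rw [pow_add, this]
    ring
  have hshift2 : ∑' j, g (j + 2) = (∑' j, g j) - (g 0 + g 1) := by
    have := Summable.sum_add_tsum_nat_add (f := g) 2 hg
    rw [Finset.sum_range_succ, Finset.sum_range_one] at this
    linarith
  have hshift3 : ∑' j, g (j + 3) = (∑' j, g j) - (g 0 + g 1 + g 2) := by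
    have := Summable.sum_add_tsum_nat_add (f := g) 3 hg
    rw [Finset.sum_range_succ, Finset.sum_range_succ, Finset.sum_range_one] at this
    linarith
  have hkey : g 0 + t * g 1 + t ^ 2 * g 2 ≤ ∑' j, t ^ j * g j := by
    have := Summable.sum_le_tsum (Finset.range 3)
      (fun j _ => mul_nonneg (pow_nonneg ht0 j) (by positivity)) hgt
    rw [Finset.sum_range_succ, Finset.sum_range_succ, Finset.sum_range_one] at this
    simpa using this
  have hg0 : g 0 = 1 / 2 := by norm_num [hgdef]
  have hu2 : u ^ 2 / ustar ^ 2 = t ^ 2 := by rw [ht, div_pow]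
  rw [hu2, hf2u, hf2]
  have e4 : t * (1 - t) * ustar ^ 2 * fSeries 4 ustar
      = t * (1 - t) * ((∑' j, g j) - (g 0 + g 1)) := by
    rw [mul_assoc, hf4, hshift2]
  have e5 : t ^ 2 * ustar ^ 3 * fSeries 5 ustar
      = t ^ 2 * ((∑' j, g j) - (g 0 + g 1 + g 2)) := by
    rw [mul_assoc, hf5, hshift3]
  rw [e4, e5]
  nlinarith [hkey, hg0]
end

section
/- (Generalised interpolation bound on f_2, Appendix C.) For every integer J ≥ 1 and all real u, u_* with 0 ≤ u ≤ u_* and u_* > 0, f_2(u) ≤ 1/2 + (u/u_*)(f_2(u_*) − 1/2) − (u/u_*) Σ_{j=0}^{J−1} (u_*^{j+2}/(j+4)!) (1 − u^{j+1}/u_*^{j+1}) − (u/u_*)(1 − u^{J+1}/u_*^{J+1}) u_*^{J+2} f_{J+4}(u_*). -/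
open Real Finset

/-!
Expand `f₂(v) = 1/2 + v/6 + ∑_{j<J} v^{j+2}/(j+4)! + v^{J+2} f_{J+4}(v)` at `v = u` and `v = u✶`.
Since `(u/u✶) u✶^{j+2} (1 - u^{j+1}/u✶^{j+1}) = (u/u✶) u✶^{j+2} - u^{j+2}`, all polynomial terms of the
two sides of the bound cancel, and what remains is `u^{J+2} f_{J+4}(u) ≤ u^{J+2} f_{J+4}(u✶)`, the
monotonicity of `f_{J+4}` on `[0, ∞)`.
-/

lemma summable_pow_div_factorial_add (k : ℕ) (u : ℝ) :
    Summable (fun j : ℕ => u ^ j / ((j + k).factorial : ℝ)) := by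
  refine Summable.of_norm_bounded (Real.summable_pow_div_factorial |u|) fun j => ?_
  rw [norm_div, norm_pow, Real.norm_eq_abs, Real.norm_eq_abs, Nat.abs_cast]
  gcongr
  exact Nat.le_add_right j k

lemma fSeries_eq_sum_add_pow_mul (k n : ℕ) (u : ℝ) :
    fSeries k u = ∑ j ∈ range n, u ^ j / ((j + k).factorial : ℝ) + u ^ n * fSeries (n + k) u := by
  rw [fSeries, ← (summable_pow_div_factorial_add k u).sum_add_tsum_nat_add n, fSeries,
    ← tsum_mul_left]
  congr 1
  refine tsum_congr fun j => ?_
  rw [pow_add, add_assoc]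
  ring

lemma fSeries_le_fSeries (k : ℕ) {x y : ℝ} (hx : 0 ≤ x) (hxy : x ≤ y) :
    fSeries k x ≤ fSeries k y :=
  Summable.tsum_le_tsum (fun j => by gcongr) (summable_pow_div_factorial_add k x)
    (summable_pow_div_factorial_add k y)

lemma fSeries_two_eq_s14 (J : ℕ) (v : ℝ) :
    fSeries 2 v = 1 / 2 + v / 6 + ∑ j ∈ range J, v ^ (j + 2) / ((j + 4).factorial : ℝ) +
      v ^ (J + 2) * fSeries (J + 4) v := by
  rw [fSeries_eq_sum_add_pow_mul 2 2, fSeries_eq_sum_add_pow_mul 4 J, mul_add, mul_sum,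
    ← mul_assoc, ← pow_add, add_comm 2 J]
  simp only [sum_range_succ, sum_range_zero, pow_mul_comm v 2, ← mul_div_assoc, ← pow_add]
  norm_num [Nat.factorial]
  ring

theorem f_two_interpolation_bound_general_general
    (J : ℕ) (u ustar : ℝ) (hu : 0 ≤ u) (huu : u ≤ ustar) (hustar : 0 < ustar) :
    fSeries 2 u ≤ 1 / 2 + (u / ustar) * (fSeries 2 ustar - 1 / 2) -
      (u / ustar) * ∑ j ∈ Finset.range J,
        (ustar ^ (j + 2) / (Nat.factorial (j + 4) : ℝ)) * (1 - u ^ (j + 1) / ustar ^ (j + 1)) -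
      (u / ustar) * (1 - u ^ (J + 1) / ustar ^ (J + 1)) * ustar ^ (J + 2) *
        fSeries (J + 4) ustar := by
  have hne : ustar ≠ 0 := hustar.ne'
  have hterm : ∀ j : ℕ, u / ustar * (ustar ^ (j + 2) / ((j + 4).factorial : ℝ) *
      (1 - u ^ (j + 1) / ustar ^ (j + 1))) =
      u / ustar * (ustar ^ (j + 2) / ((j + 4).factorial : ℝ)) -
        u ^ (j + 2) / ((j + 4).factorial : ℝ) := by
    intro j
    field_simp
    ring
  have htail : u / ustar * (1 - u ^ (J + 1) / ustar ^ (J + 1)) * ustar ^ (J + 2) =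
      u / ustar * ustar ^ (J + 2) - u ^ (J + 2) := by
    field_simp
    ring
  have hlinear : u / ustar * (ustar / 6) = u / 6 := by field_simp
  have hmono : u ^ (J + 2) * fSeries (J + 4) u ≤ u ^ (J + 2) * fSeries (J + 4) ustar :=
    mul_le_mul_of_nonneg_left (fSeries_le_fSeries _ hu huu) (pow_nonneg hu _)
  rw [mul_sum, sum_congr rfl fun j _ => hterm j, sum_sub_distrib, ← mul_sum, htail,
    fSeries_two_eq_s14 J u, fSeries_two_eq_s14 J ustar]
  linear_combination hmono - hlinear

/-- **Generalised interpolation bound on `f₂`** (Appendix C). For every integer `J ≥ 1`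
and `0 ≤ u ≤ u✶` with `u✶ > 0`,
`f₂(u) ≤ 1/2 + (u/u✶)(f₂(u✶) − 1/2) − (u/u✶) ∑_{j=0}^{J−1} (u✶^{j+2}/(j+4)!)(1 − u^{j+1}/u✶^{j+1})
 − (u/u✶)(1 − u^{J+1}/u✶^{J+1}) u✶^{J+2} f_{J+4}(u✶)`. -/
theorem f_two_interpolation_bound_general
    (J : ℕ) (hJ : 1 ≤ J) (u ustar : ℝ) (hu : 0 ≤ u) (huu : u ≤ ustar) (hustar : 0 < ustar) :
    fSeries 2 u ≤ 1 / 2 + (u / ustar) * (fSeries 2 ustar - 1 / 2) -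
      (u / ustar) * ∑ j ∈ Finset.range J,
        (ustar ^ (j + 2) / (Nat.factorial (j + 4) : ℝ)) * (1 - u ^ (j + 1) / ustar ^ (j + 1)) -
      (u / ustar) * (1 - u ^ (J + 1) / ustar ^ (J + 1)) * ustar ^ (J + 2) *
        fSeries (J + 4) ustar :=
  f_two_interpolation_bound_general_general J u ustar hu huu hustar
end
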